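/- Pseudoreachability lies between the left weak order and the Bruhat order on S_n: for all permutations x, y of [n], if x ≥_W y then x ≥_P y, and if x ≥_P y then x ≥_B y. -/

import Mathlib

/-- `o` is the outcome of running parking Algorithm A on preference vector `a`:
car `i` parks in the first unoccupied spot in `[a i, n]`, and every car parks. -/
def IsAOutcome {n : ℕ} (a o : Fin n → Fin n) : Prop :=
  Function.Injective o ∧ ∀ i, a i ≤ o i ∧
    ∀ s, a i ≤ s → s < o i → ∃ j, j < i ∧ o j = s

/-- `a` is a parking function. -/
def IsParkingFunction {n : ℕ} (a : Fin n → Fin n) : Prop :=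
  ∃ o, IsAOutcome a o

/-- `o` is the outcome of running parking Algorithm B on the pair `(a, b)`:
car `i` parks in the first unoccupied spot in `[a i, b i]`, and every car parks. -/
def IsBOutcome {n : ℕ} (a b o : Fin n → Fin n) : Prop :=
  Function.Injective o ∧ ∀ i, a i ≤ o i ∧ o i ≤ b i ∧
    ∀ s, a i ≤ s → s < o i → ∃ j, j < i ∧ o j = s

/-- `(a, b)` is an interval parking function. -/
def IsIPF {n : ℕ} (a b : Fin n → Fin n) : Prop :=
  ∃ o, IsBOutcome a b o

/-- The conjugate (reverse complement) `x*` of `x`, with `x*(i) = n + 1 - x(n + 1 - i)`. -/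
def pconj {n : ℕ} (f : Fin n → Fin n) : Fin n → Fin n :=
  fun i => (f i.rev).rev

/-- The pair `(x, y)` is reachable, `x ⊵_R y`: there is an IPF `(a, b)` with
`O(a) = x` and `O(b*) = y*`. -/
def Reaches {n : ℕ} (x y : Fin n → Fin n) : Prop :=
  ∃ a b : Fin n → Fin n, IsIPF a b ∧ IsAOutcome a x ∧ IsAOutcome (pconj b) (pconj y)

/-- Pseudoreachability `x ≥_P y`: the reflexive-transitive closure of reachability. -/
def PseudoGE {n : ℕ} (x y : Equiv.Perm (Fin n)) : Prop :=
  Relation.ReflTransGen (fun u v : Equiv.Perm (Fin n) => Reaches ⇑u ⇑v) x y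

/-- `#{k ∈ [i] : x(k) ≥ j}` (with `i`, `j` zero-indexed). -/
def bcount {n : ℕ} (x : Fin n → Fin n) (i j : Fin n) : ℕ :=
  (Finset.univ.filter (fun k : Fin n => k ≤ i ∧ j ≤ x k)).card

/-- The Bruhat order `x ≥_B y` on the symmetric group. -/
def BruhatGE {n : ℕ} (x y : Equiv.Perm (Fin n)) : Prop :=
  ∀ i j : Fin n, bcount ⇑y i j ≤ bcount ⇑x i j

/-- The number of inversions (the Coxeter length) of `f`. -/
def invCount {n : ℕ} (f : Fin n → Fin n) : ℕ :=
  (Finset.univ.filter (fun p : Fin n × Fin n => p.1 < p.2 ∧ f p.2 < f p.1)).card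

/-- The adjacent transposition `s_i` exchanging `i` and `i+1` (one-indexed),
as a permutation of `Fin n`. -/
def sgen (n : ℕ) (i : ℕ) : Equiv.Perm (Fin n) :=
  if h : 1 ≤ i ∧ i < n then Equiv.swap ⟨i - 1, by omega⟩ ⟨i, h.2⟩ else 1

/-- Left weak order: `x ≥_W y` iff `x = s_{i₁} ⋯ s_{i_k} · y` with `ℓ(x) = ℓ(y) + k`. -/
def WeakGE {n : ℕ} (x y : Equiv.Perm (Fin n)) : Prop :=
  ∃ l : List ℕ, (∀ i ∈ l, 1 ≤ i ∧ i ≤ n - 1) ∧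
    x = (l.map (sgen n)).prod * y ∧ invCount ⇑x = invCount ⇑y + l.length

/-- The projection `x ↦ x̂` deleting the last position and the value `x(n)`. -/
def hatf {n : ℕ} (x : Fin (n + 1) → Fin (n + 1)) : Fin n → Fin n :=
  fun i =>
    if h : (x i.castSucc).val < (x (Fin.last n)).val
    then ⟨(x i.castSucc).val, by have h1 := (x (Fin.last n)).isLt; omega⟩
    else ⟨(x i.castSucc).val - 1, by have h1 := (x i.castSucc).isLt; have h2 := i.isLt; omega⟩

/-- `lam n f k` is `λ_k` of the permutation of `[n]` with one-line notation `f(1), …, f(n)`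
(one-indexed): `λ_{n-1}(x) = n - x(n)` and `λ_k(x) = λ_k(x̄)` for `k ≤ n - 2`, where
`x̄ ∈ S_{n-1}` is the restriction of `u⁻¹·x` (`u = s_{x(n)} ⋯ s_{n-1}`), concretely
`x̄(i) = x(i)` if `x(i) < x(n)` and `x̄(i) = x(i) - 1` if `x(i) > x(n)`. -/
def lam : ℕ → (ℕ → ℕ) → ℕ → ℕ
  | 0, _, _ => 0
  | n + 1, f, k =>
    if k = n then (n + 1) - f (n + 1)
    else lam n (fun i => if f i < f (n + 1) then f i else f i - 1) k

/-- The one-line notation of `x`, as a one-indexed function `ℕ → ℕ`. -/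
def oneline {n : ℕ} (x : Fin n → Fin n) : ℕ → ℕ :=
  fun i => if h : i - 1 < n then (x ⟨i - 1, h⟩).val + 1 else 0

/-- `y` contains the pattern `σ`. -/
def ContainsPattern {n m : ℕ} (y : Equiv.Perm (Fin n)) (σ : Equiv.Perm (Fin m)) : Prop :=
  ∃ f : Fin m → Fin n, StrictMono f ∧ ∀ j k, y (f j) < y (f k) ↔ σ j < σ k

/-- `x` is an AR (Arndt–Riehl) permutation: `x⁻¹(i) ≤ i + 1` for all `i ∈ [n]`. -/
def IsAR {n : ℕ} (x : Equiv.Perm (Fin n)) : Prop :=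
  ∀ i : Fin n, (x.symm i).val ≤ i.val + 1

/-!
If `x = s_v w` with `w⁻¹(v) < w⁻¹(v+1)`, so that `x` covers `w` in the left weak order, then
`(a, b) = (x, max x w)` is an interval parking function with `O(a) = x` and `O(b*) = w*`: the
preferences `b*` and `w*` differ only for the car coming from `w⁻¹(v)`, which prefers one spot
lower in `b*`, and that spot is already taken by the earlier car coming from `w⁻¹(v+1)`. Hence a
saturated weak-order chain is a chain of reachable pairs.

Conversely, if `(a, b)` witnesses `x ⊵_R y`, the interval parking outcome is `O(a) = x`, so
`x ≤ b` and `b* ≤ x*` pointwise. Algorithm A parks the first `I` cars as low as any injective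
assignment above the preferences does, so `#{k < I : y*(k) < J} ≥ #{k < I : x*(k) < J}`; read
back through the conjugation these are the rank inequalities of `x ≥_B y`, and `≥_B` is
transitive.
-/

open Finset Equiv

section Parking

variable {n : ℕ}

theorem IsAOutcome.unique {a o o' : Fin n → Fin n} (h : IsAOutcome a o) (h' : IsAOutcome a o') :
    o = o' := by
  funext i
  induction i using WellFoundedLT.induction with
  | _ i ih =>
    by_contra hne
    rcases lt_or_gt_of_ne hne with hlt | hlt
    · obtain ⟨j, hji, hj⟩ := (h'.2 i).2 (o i) (h.2 i).1 hlt
      exact hji.ne (h.1 ((ih j hji).trans hj))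
    · obtain ⟨j, hji, hj⟩ := (h.2 i).2 (o' i) (h'.2 i).1 hlt
      exact hji.ne (h'.1 ((ih j hji).symm.trans hj))

theorem IsBOutcome.isAOutcome {a b o : Fin n → Fin n} (h : IsBOutcome a b o) : IsAOutcome a o :=
  ⟨h.1, fun i => ⟨(h.2 i).1, (h.2 i).2.2⟩⟩

theorem isAOutcome_self {x : Fin n → Fin n} (hx : Function.Injective x) : IsAOutcome x x :=
  ⟨hx, fun _ => ⟨le_rfl, fun _ h₁ h₂ => absurd (h₁.trans_lt h₂) (lt_irrefl _)⟩⟩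

theorem isIPF_of_le {x b : Fin n → Fin n} (hx : Function.Injective x) (hxb : ∀ i, x i ≤ b i) :
    IsIPF x b :=
  ⟨x, hx, fun i => ⟨le_rfl, hxb i, fun _ h₁ h₂ => absurd (h₁.trans_lt h₂) (lt_irrefl _)⟩⟩

theorem pconj_injective {f : Fin n → Fin n} (hf : Function.Injective f) :
    Function.Injective (pconj f) :=
  Fin.rev_injective.comp (hf.comp Fin.rev_injective)

theorem pconj_le_pconj {f g : Fin n → Fin n} (h : ∀ i, f i ≤ g i) (i : Fin n) :
    pconj g i ≤ pconj f i :=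
  Fin.rev_le_rev.mpr (h i.rev)

end Parking

section BruhatOrder

variable {n : ℕ}

def countBelow (f : Fin n → Fin n) (I J : ℕ) : ℕ :=
  #{k | k.val < I ∧ (f k).val < J}

theorem countBelow_succ (f : Fin n → Fin n) (i : Fin n) (J : ℕ) :
    countBelow f (i.val + 1) J = countBelow f i.val J + if (f i).val < J then 1 else 0 := by
  have hsplit : filter (fun k : Fin n => k.val < i.val + 1 ∧ (f k).val < J) univ =
      filter (fun k => k.val < i.val ∧ (f k).val < J) univ ∪
        filter (fun k => (f k).val < J) {i} := by
    ext k; simp only [mem_union, mem_filter, mem_univ, mem_singleton, true_and, Fin.ext_iff]; omega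
  rw [countBelow, countBelow, hsplit, card_union_of_disjoint, filter_singleton]
  · split_ifs <;> rfl
  · refine disjoint_left.mpr fun k hk hk' => ?_
    rw [mem_filter] at hk hk'
    exact (mem_singleton.mp hk'.1 ▸ hk.2.1).false

theorem countBelow_add_card_band (f : Fin n → Fin n) (I : ℕ) {J' J : ℕ} (h : J' ≤ J) :
    countBelow f I J' + #{k | k.val < I ∧ J' ≤ (f k).val ∧ (f k).val < J} = countBelow f I J := by
  rw [countBelow, countBelow, ← card_union_of_disjoint]
  · congr 1; ext k; simp only [mem_union, mem_filter, mem_univ, true_and]; omega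
  · exact disjoint_left.mpr fun k hk hk' => by simp only [mem_filter] at hk hk'; omega

theorem card_band_le {f : Fin n → Fin n} (hf : Function.Injective f) (I J' J : ℕ) :
    #{k | k.val < I ∧ J' ≤ (f k).val ∧ (f k).val < J} ≤ J - J' := by
  rw [← Nat.card_Ico]
  refine card_le_card_of_injOn (fun k => (f k).val) (fun k hk => ?_)
    (fun k _ k' _ h => hf (Fin.ext h))
  simp only [coe_filter, mem_univ, true_and, Set.mem_ofPred_eq] at hk
  simp only [coe_Ico, Set.mem_Ico]; omega

theorem le_card_band_of_isAOutcome {c z : Fin n → Fin n} (hz : IsAOutcome c z) (i : Fin n)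
    {J : ℕ} (hJ : J ≤ (z i).val) :
    J - (c i).val ≤ #{k | k.val < i.val ∧ (c i).val ≤ (z k).val ∧ (z k).val < J} := by
  rw [← Nat.card_Ico]
  refine (card_le_card fun s hs => ?_).trans (card_image_le (f := fun k => (z k).val))
  rw [mem_Ico] at hs
  obtain ⟨k, hki, hk⟩ :=
    (hz.2 i).2 ⟨s, by omega⟩ (Fin.le_def.mpr hs.1) (Fin.lt_def.mpr (by simp only; omega))
  refine mem_image.mpr ⟨k, ?_, by simp [hk]⟩
  simp only [mem_filter, mem_univ, true_and, hk]
  exact ⟨hki, hs.1, hs.2⟩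

theorem countBelow_le_of_isAOutcome {c z w : Fin n → Fin n} (hz : IsAOutcome c z)
    (hw : Function.Injective w) (hcw : ∀ i, c i ≤ w i) :
    ∀ I ≤ n, ∀ J, countBelow w I J ≤ countBelow z I J := by
  intro I
  induction I with
  | zero => simp [countBelow]
  | succ I ih =>
    intro hI J
    have ih := ih (by omega)
    obtain ⟨i, rfl⟩ : ∃ i : Fin n, i.val = I := ⟨⟨I, hI⟩, rfl⟩
    by_cases hwJ : (w i).val < J
    · by_cases hzJ : (z i).val < J
      · have := ih J
        rw [countBelow_succ w i, countBelow_succ z i, if_pos hwJ, if_pos hzJ]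
        omega
      -- Car `i` overshoots `J` in `z`, so every spot in `[c i, J)` was taken by an earlier car.
      have hcJ : (c i).val ≤ J := (Fin.le_def.mp (hcw i)).trans hwJ.le
      have hw_succ := countBelow_succ w i (c i).val
      have hz_succ := countBelow_succ z i J
      rw [if_neg (not_lt.mpr (Fin.le_def.mp (hcw i)))] at hw_succ
      rw [if_neg hzJ] at hz_succ
      have hw_split := countBelow_add_card_band w (i.val + 1) hcJ
      have hw_band := card_band_le hw (i.val + 1) (c i).val J
      have hz_split := countBelow_add_card_band z i.val hcJ
      have hz_band := le_card_band_of_isAOutcome hz i (not_lt.mp hzJ)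
      have := ih (c i).val
      omega
    · have := ih J
      rw [countBelow_succ w i, countBelow_succ z i, if_neg hwJ]
      omega

theorem bcount_add_countBelow_pconj {x : Fin n → Fin n} (hx : Function.Bijective x)
    (i j : Fin n) : bcount x i j + countBelow (pconj x) i.rev (j.rev + 1) = n - j := by
  have hrev : countBelow (pconj x) i.rev (j.rev + 1) = #{k | i < k ∧ j ≤ x k} :=
    card_equiv Fin.revPerm fun k => by
      rw [mem_filter, mem_filter]
      simp only [mem_univ, true_and, pconj, Fin.revPerm_apply, Fin.val_rev, Fin.lt_def,
        Fin.le_def]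
      omega
  have htotal : #{k | j ≤ x k} = n - j := by
    rw [← Fin.card_Ici j]
    exact card_equiv (Equiv.ofBijective x hx) (by simp)
  rw [bcount, hrev, ← htotal, ← card_filter_add_card_filter_not (s := {k | j ≤ x k}) (· ≤ i)]
  simp only [filter_filter, not_le]
  congr 2 <;> ext k <;> simp only [mem_filter, mem_univ, true_and] <;> tauto

theorem Reaches.bruhatGE {x y : Equiv.Perm (Fin n)} (h : Reaches x y) : BruhatGE x y := by
  obtain ⟨a, b, ⟨o, ho⟩, hax, hby⟩ := h
  have hxb : ∀ i, x i ≤ b i := fun i => hax.unique ho.isAOutcome ▸ (ho.2 i).2.1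
  intro i j
  have hdom := countBelow_le_of_isAOutcome hby (pconj_injective x.injective)
    (pconj_le_pconj hxb) i.rev i.rev.isLt.le (j.rev + 1)
  have hx := bcount_add_countBelow_pconj x.bijective i j
  have hy := bcount_add_countBelow_pconj y.bijective i j
  omega

theorem PseudoGE.bruhatGE {x y : Equiv.Perm (Fin n)} (h : PseudoGE x y) : BruhatGE x y := by
  induction h with
  | refl => exact fun i j => le_rfl
  | tail _ hr ih => exact fun i j => (hr.bruhatGE i j).trans (ih i j)

end BruhatOrder

section WeakOrder

variable {n : ℕ}

theorem swap_apply_lt_swap_apply_iff {A B : Fin n} (hAB : B.val = A.val + 1) {a b : Fin n}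
    (hab : a < b) : swap A B b < swap A B a ↔ a = A ∧ b = B := by
  simp only [swap_apply_def]
  split_ifs <;> simp only [Fin.lt_def, Fin.ext_iff] at * <;> omega

theorem invCount_swap_mul {A B : Fin n} (hAB : B.val = A.val + 1) {w : Perm (Fin n)}
    (h : w.symm A < w.symm B) : invCount ⇑(swap A B * w) = invCount ⇑w + 1 := by
  have hAB' : A < B := Fin.lt_def.mpr (by omega)
  have hinv : ({p | p.1 < p.2 ∧ (swap A B * w) p.2 < (swap A B * w) p.1} : Finset _) =
      insert (w.symm A, w.symm B) ({p | p.1 < p.2 ∧ w p.2 < w p.1} : Finset (Fin n × Fin n)) := by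
    ext ⟨u, t⟩
    rw [mem_insert, mem_filter, mem_filter]
    simp only [mem_univ, true_and, Prod.mk.injEq, Perm.coe_mul, Function.comp_apply,
      eq_symm_apply]
    rcases lt_trichotomy (w u) (w t) with hut | hut | hut
    · rw [swap_apply_lt_swap_apply_iff hAB hut]
      grind
    · grind
    · grind [swap_apply_lt_swap_apply_iff]
  rw [invCount, invCount, hinv, card_insert_of_notMem]
  rw [mem_filter]
  simp [hAB'.not_gt]

theorem reaches_swap_mul {A B : Fin n} (hAB : B.val = A.val + 1) {w : Perm (Fin n)}
    (h : w.symm A < w.symm B) : Reaches ⇑(swap A B * w) ⇑w := by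
  set x := swap A B * w
  refine ⟨x, fun i => max (x i) (w i), isIPF_of_le x.injective fun i => le_max_left _ _,
    isAOutcome_self x.injective, pconj_injective w.injective,
    fun i => ⟨pconj_le_pconj (fun i => le_max_right _ _) i, fun s hbs hsw => ?_⟩⟩
  have hA : w i.rev = A ∧ s = B.rev := by
    simp only [pconj, x, Perm.coe_mul, Function.comp_apply, swap_apply_def, Fin.le_def,
      Fin.lt_def, Fin.ext_iff, Fin.val_rev, Fin.coe_max] at hbs hsw ⊢
    split_ifs at hbs <;> omega
  refine ⟨(w.symm B).rev, ?_, ?_⟩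
  · have hi : i.rev = w.symm A := by rw [← hA.1, symm_apply_apply]
    rwa [← Fin.rev_lt_rev, Fin.rev_rev, hi]
  · simp [pconj, hA.2]

theorem invCount_swap_mul_or {A B : Fin n} (hAB : B.val = A.val + 1) (w : Perm (Fin n)) :
    (invCount ⇑(swap A B * w) = invCount ⇑w + 1 ∧ Reaches ⇑(swap A B * w) ⇑w) ∨
      invCount ⇑w = invCount ⇑(swap A B * w) + 1 := by
  rcases lt_trichotomy (w.symm A) (w.symm B) with h | h | h
  · exact .inl ⟨invCount_swap_mul hAB h, reaches_swap_mul hAB h⟩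
  · exact absurd (w.symm.injective h) (Fin.ne_of_val_ne (by omega))
  · right
    have h' : (swap A B * w).symm A < (swap A B * w).symm B := by simpa [Perm.mul_def] using h
    simpa [← mul_assoc] using invCount_swap_mul hAB h'

theorem sgen_eq_swap {i : ℕ} (hi : 1 ≤ i ∧ i ≤ n - 1) :
    ∃ A B : Fin n, B.val = A.val + 1 ∧ sgen n i = swap A B :=
  ⟨⟨i - 1, by omega⟩, ⟨i, by omega⟩, by simp only; omega, by rw [sgen, dif_pos (by omega)]⟩

theorem invCount_sgen_mul_or {i : ℕ} (hi : 1 ≤ i ∧ i ≤ n - 1) (w : Perm (Fin n)) :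
    (invCount ⇑(sgen n i * w) = invCount ⇑w + 1 ∧ Reaches ⇑(sgen n i * w) ⇑w) ∨
      invCount ⇑w = invCount ⇑(sgen n i * w) + 1 := by
  obtain ⟨A, B, hAB, hs⟩ := sgen_eq_swap hi
  exact hs ▸ invCount_swap_mul_or hAB w

theorem invCount_prod_mul_le {l : List ℕ} (hl : ∀ i ∈ l, 1 ≤ i ∧ i ≤ n - 1)
    (y : Perm (Fin n)) : invCount ⇑((l.map (sgen n)).prod * y) ≤ invCount ⇑y + l.length := by
  induction l with
  | nil => simp
  | cons i l ih =>
    have ih := ih fun j hj => hl j (List.mem_cons_of_mem _ hj)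
    rw [List.map_cons, List.prod_cons, mul_assoc, List.length_cons]
    rcases invCount_sgen_mul_or (hl i List.mem_cons_self) ((l.map (sgen n)).prod * y) with
      ⟨h, -⟩ | h <;> omega

theorem pseudoGE_prod_mul {l : List ℕ} (hl : ∀ i ∈ l, 1 ≤ i ∧ i ≤ n - 1) (y : Perm (Fin n))
    (h : invCount ⇑((l.map (sgen n)).prod * y) = invCount ⇑y + l.length) :
    PseudoGE ((l.map (sgen n)).prod * y) y := by
  induction l with
  | nil => rw [List.map_nil, List.prod_nil, one_mul]; exact .refl
  | cons i l ih =>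
    have hl' : ∀ j ∈ l, 1 ≤ j ∧ j ≤ n - 1 := fun j hj => hl j (List.mem_cons_of_mem _ hj)
    have hle := invCount_prod_mul_le hl' y
    rw [List.map_cons, List.prod_cons, mul_assoc, List.length_cons] at h
    rw [List.map_cons, List.prod_cons, mul_assoc]
    rcases invCount_sgen_mul_or (hl i List.mem_cons_self) ((l.map (sgen n)).prod * y) with
      ⟨hstep, hreach⟩ | hstep
    · exact .head hreach (ih hl' (by omega))
    · omega

theorem WeakGE.pseudoGE {x y : Perm (Fin n)} (h : WeakGE x y) : PseudoGE x y := by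
  obtain ⟨l, hl, rfl, hinv⟩ := h
  exact pseudoGE_prod_mul hl y hinv

end WeakOrder

/-- Pseudoreachability lies between the left weak order and the
Bruhat order: `x ≥_W y → x ≥_P y` and `x ≥_P y → x ≥_B y`. -/
theorem stmt8 {n : ℕ} (x y : Equiv.Perm (Fin n)) :
    (WeakGE x y → PseudoGE x y) ∧ (PseudoGE x y → BruhatGE x y) :=
  ⟨WeakGE.pseudoGE, PseudoGE.bruhatGE⟩
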